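/- arXiv:2206.05036 — 2 statements merged into one kernel-verified Lean document; each statement's English description precedes it below -/
import Mathlib

section
/- Let Ω be a class of C*-algebras and let A be a unital simple C*-algebra. If A belongs to TAΩ, then A belongs to STAΩ. -/
open Filter Topology
open scoped Matrix.Norms.L2Operator

section Defs

variable {A : Type*} [NonUnitalCStarAlgebra A] [PartialOrder A] [StarOrderedRing A]

def CuntzLE (a b : A) : Prop :=
  ∃ v : ℕ → A, Tendsto (fun n => ‖v n * b * star (v n) - a‖) atTop (nhds 0)

def CuntzLEIn (S : Set A) (a b : A) : Prop :=
  ∃ v : ℕ → A, (∀ n, v n ∈ S) ∧ Tendsto (fun n => ‖v n * b * star (v n) - a‖) atTop (nhds 0)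

noncomputable def cutoff (ε : ℝ) (a : A) : A := cfcₙ (fun t : ℝ => max 0 (t - ε)) a

def IsProjection (p : A) : Prop := IsSelfAdjoint p ∧ p * p = p

def IsSimpleCStarAlgebra (A : Type*) [NonUnitalCStarAlgebra A] : Prop :=
  (⊥ : TwoSidedIdeal A) ≠ ⊤ ∧
    ∀ I : TwoSidedIdeal A, IsClosed (I : Set A) → I = ⊥ ∨ I = ⊤

def IsCompletelyPositive {n : ℕ} (ψ : Matrix (Fin n) (Fin n) ℂ →ₗ[ℂ] A) : Prop :=
  ∀ (k : ℕ) (M : Matrix (Fin k) (Fin k) (Matrix (Fin n) (Fin n) ℂ)),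
    (∃ N : Matrix (Fin k) (Fin k) (Matrix (Fin n) (Fin n) ℂ), M = star N * N) →
      ∃ N' : Matrix (Fin k) (Fin k) A, M.map ψ = star N' * N'

def IsOrderZeroCPCInto {n : ℕ} (S : Set A) (ψ : Matrix (Fin n) (Fin n) ℂ →ₗ[ℂ] A) : Prop :=
  (∀ x, ψ x ∈ S) ∧ IsCompletelyPositive ψ ∧ (∀ x, ‖ψ x‖ ≤ ‖x‖) ∧
    ∀ e f : Matrix (Fin n) (Fin n) ℂ, e * f = 0 → ψ e * ψ f = 0

/-- A (possibly non-unital) C*-algebra is tracially 𝒵-absorbing. -/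
def TraciallyZAbsorbing (A : Type*) [NonUnitalCStarAlgebra A] [PartialOrder A]
    [StarOrderedRing A] : Prop :=
  IsEmpty (A ≃⋆ₐ[ℂ] ℂ) ∧
    ∀ (F : Finset A) (ε : ℝ), 0 < ε → ∀ a b : A, 0 ≤ a → a ≠ 0 → 0 ≤ b → b ≠ 0 →
      ∀ n : ℕ, 0 < n →
        ∃ ψ : Matrix (Fin n) (Fin n) ℂ →ₗ[ℂ] A, IsOrderZeroCPCInto Set.univ ψ ∧
          CuntzLE (cutoff ε (b * b - b * ψ 1 * b)) a ∧
          ∀ x : Matrix (Fin n) (Fin n) ℂ, ‖x‖ = 1 → ∀ y ∈ F, ‖ψ x * y - y * ψ x‖ < ε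

/-- A C*-subalgebra `B ⊆ A` is tracially 𝒵-absorbing (as a C*-algebra in its own right). -/
def TraciallyZAbsorbingIn (B : NonUnitalStarSubalgebra ℂ A) : Prop :=
  IsEmpty (B ≃⋆ₐ[ℂ] ℂ) ∧
    ∀ (F : Finset A), (F : Set A) ⊆ (B : Set A) → ∀ ε : ℝ, 0 < ε →
      ∀ a b : A, a ∈ B → 0 ≤ a → a ≠ 0 → b ∈ B → 0 ≤ b → b ≠ 0 →
        ∀ n : ℕ, 0 < n →
          ∃ ψ : Matrix (Fin n) (Fin n) ℂ →ₗ[ℂ] A, IsOrderZeroCPCInto (B : Set A) ψ ∧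
            CuntzLEIn (B : Set A) (cutoff ε (b * b - b * ψ 1 * b)) a ∧
            ∀ x : Matrix (Fin n) (Fin n) ℂ, ‖x‖ = 1 → ∀ y ∈ F, ‖ψ x * y - y * ψ x‖ < ε

/-- The corner `p B p` of a subalgebra `B` by a projection `p`. -/
def corner (p : A) (B : NonUnitalStarSubalgebra ℂ A) : NonUnitalStarSubalgebra ℂ A where
  carrier := {x | x ∈ B ∧ p * x = x ∧ x * p = x ∧ p * star x = star x ∧ star x * p = star x}
  add_mem' := by
    rintro x y ⟨hxB, hx1, hx2, hx3, hx4⟩ ⟨hyB, hy1, hy2, hy3, hy4⟩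
    refine ⟨add_mem hxB hyB, ?_, ?_, ?_, ?_⟩ <;>
      simp [mul_add, add_mul, star_add, hx1, hx2, hx3, hx4, hy1, hy2, hy3, hy4]
  zero_mem' := ⟨zero_mem _, by simp, by simp, by simp, by simp⟩
  mul_mem' := by
    rintro x y ⟨hxB, hx1, hx2, hx3, hx4⟩ ⟨hyB, hy1, hy2, hy3, hy4⟩
    refine ⟨mul_mem hxB hyB, ?_, ?_, ?_, ?_⟩
    · rw [← mul_assoc, hx1]
    · rw [mul_assoc, hy2]
    · rw [star_mul, ← mul_assoc, hy3]
    · rw [star_mul, mul_assoc, hx4]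
  smul_mem' := by
    rintro c x ⟨hxB, hx1, hx2, hx3, hx4⟩
    refine ⟨SMulMemClass.smul_mem c hxB, ?_, ?_, ?_, ?_⟩ <;>
      simp [mul_smul_comm, smul_mul_assoc, star_smul, hx1, hx2, hx3, hx4]
  star_mem' := by
    rintro x ⟨hxB, hx1, hx2, hx3, hx4⟩
    exact ⟨star_mem hxB, hx3, hx4, by simpa using hx1, by simpa using hx2⟩

/-- Membership in `STA Ω`, relative to an ambient subalgebra `C` of `A`. -/
def MemSTA (Ω : Set (NonUnitalStarSubalgebra ℂ A)) (C : NonUnitalStarSubalgebra ℂ A) : Prop :=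
  ∀ ε : ℝ, 0 < ε → ∀ F : Finset A, (F : Set A) ⊆ (C : Set A) →
    ∀ a y : A, a ∈ C → 0 ≤ a → a ≠ 0 → y ∈ C → 0 ≤ y →
      ∃ B ∈ Ω, B ≤ C ∧ IsClosed (B : Set A) ∧
        ∃ p ∈ B, IsProjection p ∧
          (∀ x ∈ F, ‖x * p - p * x‖ < ε) ∧
          (∀ x ∈ F, ∃ b ∈ B, ‖p * x * p - b‖ < ε) ∧
          CuntzLEIn (C : Set A) (cutoff ε (y * y - y * p * y)) a

end Defs

section UnitalDefs

variable {A : Type*} [CStarAlgebra A] [PartialOrder A] [StarOrderedRing A]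

/-- Membership in `TA Ω` for a unital C*-algebra. -/
def MemTA (Ω : Set (NonUnitalStarSubalgebra ℂ A)) : Prop :=
  ∀ ε : ℝ, 0 < ε → ∀ F : Finset A, ∀ a : A, 0 ≤ a → a ≠ 0 →
    ∃ (p : A) (B : NonUnitalStarSubalgebra ℂ A), IsProjection p ∧ B ∈ Ω ∧
      IsClosed (B : Set A) ∧ p ∈ B ∧ (∀ b ∈ B, p * b = b ∧ b * p = b) ∧
      (∀ x ∈ F, ‖x * p - p * x‖ < ε) ∧
      (∀ x ∈ F, ∃ b ∈ B, ‖p * x * p - b‖ < ε) ∧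
      CuntzLE (1 - p) a

/-- A unital C*-algebra is tracially 𝒵-absorbing in the unital sense. -/
def TraciallyZAbsorbingUnital (A : Type*) [CStarAlgebra A] [PartialOrder A]
    [StarOrderedRing A] : Prop :=
  IsEmpty (A ≃⋆ₐ[ℂ] ℂ) ∧
    ∀ (F : Finset A) (ε : ℝ), 0 < ε → ∀ a : A, 0 ≤ a → a ≠ 0 →
      ∀ n : ℕ, 0 < n →
        ∃ ψ : Matrix (Fin n) (Fin n) ℂ →ₗ[ℂ] A, IsOrderZeroCPCInto Set.univ ψ ∧
          CuntzLE (1 - ψ 1) a ∧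
          ∀ x : Matrix (Fin n) (Fin n) ℂ, ‖x‖ = 1 → ∀ y ∈ F, ‖ψ x * y - y * ψ x‖ < ε

end UnitalDefs

section CuntzSubequivalence

variable {A : Type*} [NonUnitalCStarAlgebra A]

theorem cuntzLEIn_univ_iff {a b : A} : CuntzLEIn Set.univ a b ↔ CuntzLE a b :=
  ⟨fun ⟨v, _, hv⟩ => ⟨v, hv⟩, fun ⟨v, hv⟩ => ⟨v, fun _ => trivial, hv⟩⟩

theorem CuntzLE.conj {a b : A} (h : CuntzLE a b) (w : A) : CuntzLE (w * a * star w) b := by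
  obtain ⟨v, hv⟩ := h
  refine ⟨fun n => w * v n, ?_⟩
  have hlim := ((tendsto_zero_iff_norm_tendsto_zero.2 hv).const_mul w).mul_const (star w)
  rw [mul_zero, zero_mul] at hlim
  refine tendsto_zero_iff_norm_tendsto_zero.1 (hlim.congr fun n => ?_)
  simp only [star_mul, mul_sub, sub_mul, mul_assoc]

/-- `max 0 (t - ε) = h t * t * h t` for `h t = √(max 0 (1 - ε / max t ε))`, which is continuous
since `max t ε ≥ ε > 0`. -/
theorem exists_isSelfAdjoint_cutoff_eq {ε : ℝ} (hε : 0 < ε) {x : A} (hx : IsSelfAdjoint x) :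
    ∃ d : A, IsSelfAdjoint d ∧ cutoff ε x = d * x * d := by
  set h : ℝ → ℝ := fun t => Real.sqrt (max 0 (1 - ε / max t ε))
  have hh : Continuous h := by fun_prop (disch := intro t; positivity)
  have hh0 : h 0 = 0 := by simp [h, max_eq_right hε.le, div_self hε.ne']
  have hfactor : (fun t : ℝ => max 0 (t - ε)) = fun t => h t * (t * h t) := by
    funext t
    rw [← mul_assoc, mul_right_comm, Real.mul_self_sqrt (le_max_left _ _)]
    rcases le_total t ε with ht | ht
    · simp [div_self hε.ne', ht]
    · have ht0 : 0 < t := hε.trans_le ht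
      have hpos : 0 ≤ 1 - ε / t := sub_nonneg.2 ((div_le_one ht0).2 ht)
      rw [max_eq_left ht, max_eq_right (by linarith), max_eq_right hpos, sub_mul,
        div_mul_cancel₀ _ ht0.ne', one_mul]
  refine ⟨cfcₙ h x, cfcₙ_predicate h x, ?_⟩
  rw [cutoff, hfactor,
    cfcₙ_mul h (fun t => t * h t) x hh.continuousOn hh0 (by fun_prop) (by simp [hh0]),
    cfcₙ_mul (fun t => t) h x continuousOn_id rfl hh.continuousOn hh0, cfcₙ_id' ℝ x, mul_assoc]

theorem CuntzLE.cutoff {ε : ℝ} (hε : 0 < ε) {a b : A} (ha : IsSelfAdjoint a)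
    (h : CuntzLE a b) : CuntzLE (cutoff ε a) b := by
  obtain ⟨d, hd, hcut⟩ := exists_isSelfAdjoint_cutoff_eq hε ha
  simpa [hcut, hd.star_eq] using h.conj d

end CuntzSubequivalence

/-- The cut-down `y (1 - p) y` is a conjugate of `1 - p ≾ a`, and `ε`-cutoffs stay below it. -/
theorem stmt3_general {A : Type*} [CStarAlgebra A] [PartialOrder A] [StarOrderedRing A]
    (Ω : Set (NonUnitalStarSubalgebra ℂ A))
    (hA : MemTA Ω) :
    MemSTA Ω (⊤ : NonUnitalStarSubalgebra ℂ A) := by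
  intro ε hε F _ a y _ ha hane _ hy
  obtain ⟨p, B, hp, hBΩ, hBclosed, hpB, -, hcomm, happrox, hp_le⟩ := hA ε hε F a ha hane
  refine ⟨B, hBΩ, le_top, hBclosed, p, hpB, hp, hcomm, happrox, ?_⟩
  have hq : IsSelfAdjoint (1 - p) := (IsSelfAdjoint.one A).sub hp.1
  have hdefect : y * y - y * p * y = y * (1 - p) * star y := by
    rw [(IsSelfAdjoint.of_nonneg hy).star_eq]
    noncomm_ring
  rw [NonUnitalStarAlgebra.coe_top, cuntzLEIn_univ_iff, hdefect]
  exact (hp_le.conj y).cutoff hε (hq.conjugate y)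

/-- If A is a unital simple C*-algebra in TAΩ, then A ∈ STAΩ. -/
theorem stmt3 {A : Type*} [CStarAlgebra A] [PartialOrder A] [StarOrderedRing A]
    (Ω : Set (NonUnitalStarSubalgebra ℂ A))
    (hsimple : IsSimpleCStarAlgebra A)
    (hA : MemTA Ω) :
    MemSTA Ω (⊤ : NonUnitalStarSubalgebra ℂ A) :=
  stmt3_general Ω hA
end

section
/- Let Ω be a class of C*-algebras that is closed under passing to unital hereditary C*-subalgebras, and let A be a unital simple C*-algebra. If A belongs to STAΩ, then A belongs to TAΩ. -/
open Filter Topology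
open scoped Matrix.Norms.L2Operator

/-!
Take `y = 1` in the `STA Ω` condition: it yields `B ∈ Ω` and a projection `p ∈ B` with
`(1 - p - δ)₊ ≾ a`. As `1 - p` is a projection, `(1 - p - δ)₊ = (1 - δ) (1 - p)`, a positive
multiple of `1 - p`, hence `1 - p ≾ a`. Replacing `B` by its corner `pBp`, which lies in `Ω` and
has unit `p`, costs nothing in the approximations since compressing by `p` does not increase norms.
-/

lemma norm_mul_mul_le_of_isStarProjection {R : Type*} [NonUnitalNormedRing R] [StarRing R]
    [CStarRing R] {p : R} (hp : IsStarProjection p) (x : R) : ‖p * x * p‖ ≤ ‖x‖ :=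
  calc ‖p * x * p‖ ≤ ‖p‖ * ‖x‖ * ‖p‖ := norm_mul₃_le
    _ ≤ 1 * ‖x‖ * 1 := by gcongr <;> exact hp.norm_le p
    _ = ‖x‖ := by ring

lemma norm_mul_mul_sub_mul_mul_le {R : Type*} [NonUnitalNormedRing R] [StarRing R]
    [CStarRing R] {p : R} (hp : IsStarProjection p) (x b : R) :
    ‖p * x * p - p * b * p‖ ≤ ‖p * x * p - b‖ := by
  have hpp := hp.isIdempotentElem.eq
  have hcompress : p * x * p - p * b * p = p * (p * x * p - b) * p := by
    simp only [mul_sub, sub_mul, ← mul_assoc, hpp]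
    rw [mul_assoc _ p p, hpp]
  rw [hcompress]
  exact norm_mul_mul_le_of_isStarProjection hp _

section Projections

variable {A : Type*} [NonUnitalCStarAlgebra A]

lemma IsProjection.isStarProjection {p : A} (hp : IsProjection p) : IsStarProjection p :=
  ⟨hp.2, hp.1⟩

lemma cutoff_of_isStarProjection {q : A} (hq : IsStarProjection q) {ε : ℝ} (hε : 0 ≤ ε)
    (hε1 : ε ≤ 1) : cutoff ε q = (1 - ε) • q := by
  rw [cutoff, ← cfcₙ_const_mul_id (R := ℝ) (1 - ε) q hq.isSelfAdjoint]
  refine cfcₙ_congr fun t ht => ?_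
  rcases hq.isIdempotentElem.quasispectrum_subset ℝ ht with rfl | rfl
  · simp [hε]
  · simp [hε1]

lemma CuntzLE.of_smul {a b : A} {r : ℝ} (hr : 0 < r) (h : CuntzLE (r • a) b) : CuntzLE a b := by
  obtain ⟨v, hv⟩ := h
  refine ⟨fun n => Real.sqrt r⁻¹ • v n, ?_⟩
  have hnorm : ∀ n, ‖Real.sqrt r⁻¹ • v n * b * star (Real.sqrt r⁻¹ • v n) - a‖
      = r⁻¹ * ‖v n * b * star (v n) - r • a‖ := by
    intro n
    have hs : Real.sqrt r⁻¹ * Real.sqrt r⁻¹ = r⁻¹ := Real.mul_self_sqrt (by positivity)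
    rw [star_smul, star_trivial, smul_mul_assoc, smul_mul_assoc, mul_smul_comm, smul_smul, hs,
      ← norm_smul_of_nonneg (inv_nonneg.2 hr.le), smul_sub, smul_smul, inv_mul_cancel₀ hr.ne',
      one_smul]
  simp_rw [hnorm]
  simpa using hv.const_mul r⁻¹

lemma CuntzLEIn.cuntzLE {S : Set A} {a b : A} (h : CuntzLEIn S a b) : CuntzLE a b :=
  let ⟨v, _, hv⟩ := h
  ⟨v, hv⟩

end Projections

section Corner

variable {A : Type*} [NonUnitalCStarAlgebra A] {p : A} {B : NonUnitalStarSubalgebra ℂ A}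

lemma isClosed_corner (hB : IsClosed (B : Set A)) : IsClosed (corner p B : Set A) := by
  have hset : (corner p B : Set A) = (B : Set A) ∩ {x | p * x = x} ∩ {x | x * p = x}
      ∩ {x | p * star x = star x} ∩ {x | star x * p = star x} := by
    ext x
    simp only [Set.mem_inter_iff, and_assoc]
    rfl
  rw [hset]
  refine (((hB.inter ?_).inter ?_).inter ?_).inter ?_ <;>
    exact isClosed_eq (by fun_prop) (by fun_prop)

lemma mul_mul_mem_corner (hp : IsStarProjection p) (hpB : p ∈ B) {b : A} (hb : b ∈ B) :
    p * b * p ∈ corner p B := by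
  have hpp := hp.isIdempotentElem.eq
  have hstar : star (p * b * p) = p * star b * p := by
    simp [star_mul, hp.isSelfAdjoint.star_eq, mul_assoc]
  have hleft : ∀ c, p * (p * c * p) = p * c * p := fun c => by rw [← mul_assoc, ← mul_assoc, hpp]
  have hright : ∀ c, p * c * p * p = p * c * p := fun c => by rw [mul_assoc _ p p, hpp]
  exact ⟨mul_mem (mul_mem hpB hb) hpB, hleft b, hright b, hstar ▸ hleft _, hstar ▸ hright _⟩

lemma mem_corner_self (hp : IsStarProjection p) (hpB : p ∈ B) : p ∈ corner p B := by
  simpa [hp.isIdempotentElem.eq] using mul_mul_mem_corner hp hpB hpB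

end Corner

theorem stmt4_general {A : Type*} [CStarAlgebra A] [PartialOrder A] [StarOrderedRing A]
    (Ω : Set (NonUnitalStarSubalgebra ℂ A))
    (hΩ : ∀ B ∈ Ω, ∀ p ∈ B, IsProjection p → corner p B ∈ Ω)
    (hA : MemSTA Ω (⊤ : NonUnitalStarSubalgebra ℂ A)) :
    MemTA Ω := by
  intro ε hε F a ha ha0
  set δ := min ε (1 / 2)
  have hδ : 0 < δ := lt_min hε one_half_pos
  have hδε : δ ≤ ε := min_le_left _ _
  have hδ1 : δ ≤ 1 / 2 := min_le_right _ _
  obtain ⟨B, hBΩ, -, hBcl, p, hpB, hp, hcomm, happrox, hcuntz⟩ :=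
    hA δ hδ F (by simp) a 1 trivial ha ha0 trivial zero_le_one
  have hp' := hp.isStarProjection
  refine ⟨p, corner p B, hp, hΩ B hBΩ p hpB hp, isClosed_corner hBcl, mem_corner_self hp' hpB,
    fun b hb => ⟨hb.2.1, hb.2.2.1⟩, fun x hx => (hcomm x hx).trans_le hδε, fun x hx => ?_, ?_⟩
  · obtain ⟨b, hb, hxb⟩ := happrox x hx
    exact ⟨p * b * p, mul_mul_mem_corner hp' hpB hb,
      ((norm_mul_mul_sub_mul_mul_le hp' x b).trans_lt hxb).trans_le hδε⟩
  · rw [one_mul, one_mul, mul_one,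
      cutoff_of_isStarProjection hp'.one_sub hδ.le (by linarith)] at hcuntz
    exact hcuntz.cuntzLE.of_smul (by linarith)

/-- If Ω is closed under passing to unital hereditary C*-subalgebras and A is a
unital simple C*-algebra in STAΩ, then A ∈ TAΩ. -/
theorem stmt4 {A : Type*} [CStarAlgebra A] [PartialOrder A] [StarOrderedRing A]
    (Ω : Set (NonUnitalStarSubalgebra ℂ A))
    (hΩ : ∀ B ∈ Ω, ∀ p ∈ B, IsProjection p → corner p B ∈ Ω)
    (hsimple : IsSimpleCStarAlgebra A)
    (hA : MemSTA Ω (⊤ : NonUnitalStarSubalgebra ℂ A)) :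
    MemTA Ω :=
  stmt4_general Ω hΩ hA
end
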